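/- Let d = ξ(π) where ξ'(t) = sin²t/√(1+sin²t), ξ(0)=0. Define p(t) = sin³t − ξ(t)·cos t·√(1+sin²t). Then for all t ∈ [0,π), p(t)·ξ(t) < (2d − ξ(t))². -/

import Mathlib

open Real

/-- The function ξ, antiderivative of sin²t/√(1+sin²t) vanishing at 0. -/
noncomputable def xi (t : ℝ) : ℝ := ∫ r in (0:ℝ)..t, Real.sin r ^ 2 / Real.sqrt (1 + Real.sin r ^ 2)

/-- p(t): the orthogonal distance from the origin to the tangent line of the elastica at E(t). -/
noncomputable def p (t : ℝ) : ℝ := Real.sin t ^ 3 - xi t * Real.cos t * Real.sqrt (1 + Real.sin t ^ 2)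

/-!
Put `x = ξ t`, `η = ξ (π - t)` and `c = cos t · √(1 + sin² t)`. The integrand of `ξ` is
symmetric about `π / 2`, so `ξ π = x + η` and the claim reads `(sin³ t - x c) x < (x + 2η)²`.
Since `|c| = √(1 - sin⁴ t) ≤ 1`, the left side is at most `sin³ t · x + x²`, so it suffices that
`sin³ u < 4 ξ u` for `u ∈ (0, π]`, applied at `u = π - t` (which also gives `η > 0`). This
follows by comparing derivatives: `(sin³)' = 3 sin² · cos = 3 sin² · c / √(1 + sin²) < 4 ξ'`.
-/

open Set

lemma abs_cos_mul_sqrt_one_add_sin_sq_le_one (t : ℝ) :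
    |cos t * √(1 + sin t ^ 2)| ≤ 1 := by
  rw [abs_mul, abs_of_nonneg (sqrt_nonneg _), ← sqrt_sq_eq_abs, ← sqrt_mul (sq_nonneg _),
    sqrt_le_one, cos_sq']
  nlinarith [sq_nonneg (sin t ^ 2)]

lemma hasDerivAt_xi (t : ℝ) : HasDerivAt xi (sin t ^ 2 / √(1 + sin t ^ 2)) t :=
  (Continuous.integral_hasStrictDerivAt
    (Continuous.div (by fun_prop) (by fun_prop) fun _ => by positivity) 0 t).hasDerivAt

lemma xi_nonneg {t : ℝ} (ht : 0 ≤ t) : 0 ≤ xi t :=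
  intervalIntegral.integral_nonneg ht fun _ _ => by positivity

lemma xi_add_xi_pi_sub (t : ℝ) : xi t + xi (π - t) = xi π := by
  have hderiv (s : ℝ) : HasDerivAt (fun s => xi s + xi (π - s)) 0 s :=
    ((hasDerivAt_xi s).fun_add ((hasDerivAt_xi (π - s)).comp_const_sub π s)).congr_deriv
      (by rw [sin_pi_sub, add_neg_cancel])
  have hconst := is_const_of_deriv_eq_zero (fun s => (hderiv s).differentiableAt)
    (fun s => (hderiv s).deriv) t 0
  simpa [xi] using hconst

lemma sin_pow_three_lt_four_mul_xi {u : ℝ} (hu0 : 0 < u) (huπ : u ≤ π) :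
    sin u ^ 3 < 4 * xi u := by
  have hderiv (s : ℝ) : HasDerivAt (fun s => 4 * xi s - sin s ^ 3)
      (4 * (sin s ^ 2 / √(1 + sin s ^ 2)) - 3 * sin s ^ 2 * cos s) s :=
    (((hasDerivAt_xi s).const_mul 4).fun_sub ((hasDerivAt_sin s).fun_pow 3)).congr_deriv
      (by norm_num)
  have hmono : StrictMonoOn (fun s => 4 * xi s - sin s ^ 3) (Icc 0 π) := by
    refine strictMonoOn_of_deriv_pos (convex_Icc 0 π)
      (HasDerivAt.continuousOn fun s _ => hderiv s) fun s hs => ?_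
    rw [interior_Icc] at hs
    have hsin : 0 < sin s := sin_pos_of_pos_of_lt_pi hs.1 hs.2
    have hc : cos s * √(1 + sin s ^ 2) ≤ 1 :=
      (abs_le.mp (abs_cos_mul_sqrt_one_add_sin_sq_le_one s)).2
    rw [(hderiv s).deriv, sub_pos, mul_div_assoc', lt_div_iff₀ (by positivity)]
    nlinarith [mul_le_mul_of_nonneg_left hc (sq_nonneg (sin s)), pow_pos hsin 2]
  simpa [xi] using hmono ⟨le_rfl, pi_pos.le⟩ ⟨hu0.le, huπ⟩ hu0

theorem stmt_10 (t : ℝ) (ht : t ∈ Set.Ico 0 π) :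
    p t * xi t < (2 * xi π - xi t) ^ 2 := by
  obtain ⟨ht0, htπ⟩ := ht
  have hkey : sin t ^ 3 < 4 * xi (π - t) := by
    simpa [sin_pi_sub] using sin_pow_three_lt_four_mul_xi (sub_pos.2 htπ) (by linarith)
  have hx : 0 ≤ xi t := xi_nonneg ht0
  have hsin : 0 ≤ sin t ^ 3 := pow_nonneg (sin_nonneg_of_nonneg_of_le_pi ht0 htπ.le) 3
  have hc : 0 ≤ 1 + cos t * √(1 + sin t ^ 2) := by
    linarith [(abs_le.mp (abs_cos_mul_sqrt_one_add_sin_sq_le_one t)).1]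
  calc p t * xi t = sin t ^ 3 * xi t - xi t ^ 2 * (cos t * √(1 + sin t ^ 2)) := by
        unfold p; ring
    _ ≤ 4 * xi (π - t) * xi t + xi t ^ 2 := by
        nlinarith [mul_le_mul_of_nonneg_right hkey.le hx, mul_nonneg (sq_nonneg (xi t)) hc]
    _ < (2 * xi π - xi t) ^ 2 := by
        rw [← xi_add_xi_pi_sub t]; nlinarith
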